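/- arXiv:1601.06529 — 2 statements merged into one kernel-verified Lean document; each statement's English description precedes it below -/
import Mathlib

section
/- Let f be strictly convex and differentiable on (0,∞), P, Q mutually orthogonal rank-one projections, 0 < λ < μ < 1 with λ+μ = 1, and S = λP + μQ. Over all rank-one projections R with range contained in range(P)+range(Q), the map R ↦ H_f(R,S) attains its maximum value −f'(λ) + C uniquely at R = P and its minimum value −f'(μ) + C uniquely at R = Q, where C = λf'(λ) − f(λ) + μf'(μ) − f(μ). -/
open Matrix
open scoped ComplexOrder

/-- Standard operator function: apply `f : ℝ → ℝ` to a Hermitian matrix via its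
spectral decomposition (junk value `0` for non-Hermitian input). -/
noncomputable def matFun {n : ℕ} (f : ℝ → ℝ) (A : Matrix (Fin n) (Fin n) ℂ) :
    Matrix (Fin n) (Fin n) ℂ :=
  if hA : A.IsHermitian then
    (hA.eigenvectorUnitary : Matrix (Fin n) (Fin n) ℂ) *
      Matrix.diagonal (fun i => (f (hA.eigenvalues i) : ℂ)) *
      (star (hA.eigenvectorUnitary : Matrix (Fin n) (Fin n) ℂ))
  else 0

/-- Bregman `f`-divergence `H_f(A,B) = tr (f(A) - f(B) - f'(B)(A-B))`. -/
noncomputable def bregman {n : ℕ} (f : ℝ → ℝ) (A B : Matrix (Fin n) (Fin n) ℂ) : ℝ :=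
  ((matFun f A - matFun f B - matFun (deriv f) B * (A - B)).trace).re

/-- Jensen `f`-divergence `J_f(A,B) = tr (½(f(A)+f(B)) - f(½(A+B)))`. -/
noncomputable def jensen {n : ℕ} (f : ℝ → ℝ) (A B : Matrix (Fin n) (Fin n) ℂ) : ℝ :=
  (((1/2 : ℂ) • (matFun f A + matFun f B) - matFun f ((1/2 : ℂ) • (A + B))).trace).re

/-- `P` is a rank-one (orthogonal) projection. -/
def IsRankOneProj {n : ℕ} (P : Matrix (Fin n) (Fin n) ℂ) : Prop :=
  P.IsHermitian ∧ P * P = P ∧ P.rank = 1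

/-! Since `P`, `Q`, `1 - P - Q` are orthogonal projections, `S = λP + μQ` has spectrum in
`{0, λ, μ}`; interpolating `g` on these three points by a polynomial gives
`g(S) = g(0)(1 - P - Q) + g(λ)P + g(μ)Q`, and likewise `f(R) = 0` because `f(0) = f(1) = 0`.
As `(1 - P - Q)R = 0`, this yields `H_f(R,S) = C - f'(λ) tr(PR) - f'(μ) tr(QR)`, where
`tr(PR) = ‖RP‖² ≥ 0`, `tr(QR) ≥ 0` and `tr(PR) + tr(QR) = tr R = 1`. Since `f'(λ) < f'(μ)`,
the maximum is attained iff `tr(QR) = 0`, i.e. `RQ = 0`, i.e. `PR = R`, which for two rank-one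
projections means `R = P`; symmetrically for the minimum. -/

section Projections

variable {k A : Type*} [Ring A] {P Q : A}

open Polynomial in
theorem aeval_smul_add_smul_of_mul_eq_zero [CommRing k] [Algebra k A] (hP : IsIdempotentElem P)
    (hQ : IsIdempotentElem Q) (hPQ : P * Q = 0) (hQP : Q * P = 0) (a b : k) (p : k[X]) :
    aeval (a • P + b • Q) p = p.eval 0 • (1 - P - Q) + p.eval a • P + p.eval b • Q := by
  induction p using Polynomial.induction_on with
  | C c => simp only [aeval_C, eval_C, Algebra.algebraMap_eq_smul_one]; module
  | add p q hp hq => simp only [map_add, eval_add, hp, hq]; module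
  | monomial m c ih =>
    rw [pow_succ, ← mul_assoc, map_mul, ih, aeval_X]
    simp only [eval_mul, eval_C, eval_X, eval_pow, add_mul, sub_mul, mul_add, one_mul, hP.eq,
      hQ.eq, hPQ, hQP, smul_mul_assoc, mul_smul_comm]
    module

open Polynomial in
theorem spectrum_smul_add_smul_subset [Field k] [Algebra k A] (hP : IsIdempotentElem P)
    (hQ : IsIdempotentElem Q) (hPQ : P * Q = 0) (hQP : Q * P = 0) (a b : k) :
    spectrum k (a • P + b • Q) ⊆ {0, a, b} := by
  nontriviality A
  intro x hx
  have hroot := spectrum.subset_polynomial_aeval _ (X * (X - C a) * (X - C b)) ⟨x, hx, rfl⟩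
  simp only [aeval_smul_add_smul_of_mul_eq_zero hP hQ hPQ hQP, eval_mul, eval_X, eval_sub,
    eval_C, sub_self, mul_zero, zero_mul, zero_smul, add_zero, spectrum.zero_eq,
    Set.mem_singleton_iff, mul_eq_zero, sub_eq_zero] at hroot
  simp only [Set.mem_insert_iff, Set.mem_singleton_iff]
  tauto

variable [StarRing A] [Algebra ℝ A] [TopologicalSpace A]
  [ContinuousFunctionalCalculus ℝ A IsSelfAdjoint]

theorem cfc_eq_zero_of_isIdempotentElem {R : A} (hR : IsIdempotentElem R) {g : ℝ → ℝ}
    (hg0 : g 0 = 0) (hg1 : g 1 = 0) : cfc g R = 0 := by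
  rw [← cfc_zero ℝ R]
  refine cfc_congr fun x hx => ?_
  rcases hR.spectrum_subset ℝ hx with rfl | rfl <;> simp [hg0, hg1]

variable [StarModule ℝ A]

theorem cfc_smul_add_smul (hP : IsStarProjection P) (hQ : IsStarProjection Q) (hPQ : P * Q = 0)
    (g : ℝ → ℝ) (a b : ℝ) :
    cfc g (a • P + b • Q) = g 0 • (1 - P - Q) + g a • P + g b • Q := by
  have hQP : Q * P = 0 :=
    (hP.isSelfAdjoint.commute_of_mul_eq_zero hQ.isSelfAdjoint hPQ).eq.symm.trans hPQ
  set s : Finset ℝ := {0, a, b}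
  set q := Lagrange.interpolate s id g
  have hq : ∀ x ∈ s, q.eval x = g x := fun x hx =>
    Lagrange.eval_interpolate_at_node g (Set.injOn_id _) hx
  have hspec : Set.EqOn g (q.eval ·) (spectrum ℝ (a • P + b • Q)) := fun x hx => by
    have := spectrum_smul_add_smul_subset hP.isIdempotentElem hQ.isIdempotentElem hPQ hQP a b hx
    exact (hq x (by simpa [s] using this)).symm
  have hsa : IsSelfAdjoint (a • P + b • Q) :=
    ((IsSelfAdjoint.all a).smul hP.isSelfAdjoint).add
      ((IsSelfAdjoint.all b).smul hQ.isSelfAdjoint)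
  rw [cfc_congr hspec, cfc_polynomial q _ hsa, aeval_smul_add_smul_of_mul_eq_zero
    hP.isIdempotentElem hQ.isIdempotentElem hPQ hQP, hq 0 (by simp [s]), hq a (by simp [s]),
    hq b (by simp [s])]

end Projections

theorem matFun_eq_cfc {n : ℕ} (g : ℝ → ℝ) {A : Matrix (Fin n) (Fin n) ℂ}
    (hA : A.IsHermitian) : matFun g A = cfc g A := by
  rw [matFun, dif_pos hA, hA.cfc_eq, IsHermitian.cfc, Unitary.conjStarAlgAut_apply]
  rfl

open LinearMap in
theorem Matrix.trace_eq_rank_of_isIdempotentElem {m K : Type*} [Fintype m] [DecidableEq m] [Field K]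
    {A : Matrix m m K} (hA : IsIdempotentElem A) : A.trace = A.rank := by
  have h : IsIdempotentElem (toLin' A) := hA.map toLinAlgEquiv'
  rw [← trace_toLin'_eq, h.isProj_range.trace, rank]
  rfl

theorem IsRankOneProj.isStarProjection {n : ℕ} {P : Matrix (Fin n) (Fin n) ℂ}
    (hP : IsRankOneProj P) : IsStarProjection P :=
  ⟨hP.2.1, hP.1⟩

theorem IsRankOneProj.trace_eq_one {n : ℕ} {P : Matrix (Fin n) (Fin n) ℂ}
    (hP : IsRankOneProj P) : P.trace = 1 := by
  rw [trace_eq_rank_of_isIdempotentElem hP.2.1, hP.2.2, Nat.cast_one]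

namespace IsStarProjection

variable {m 𝕜 : Type*} [Fintype m] [RCLike 𝕜] {P R : Matrix m m 𝕜}

theorem trace_mul_eq_trace_conjTranspose_mul_self (hP : IsStarProjection P)
    (hR : IsStarProjection R) : (P * R).trace = ((R * P)ᴴ * (R * P)).trace := by
  rw [conjTranspose_mul, ← star_eq_conjTranspose, ← star_eq_conjTranspose,
    hP.isSelfAdjoint.star_eq, hR.isSelfAdjoint.star_eq, ← mul_assoc, mul_assoc P,
    hR.isIdempotentElem.eq, trace_mul_comm (P * R) P, ← mul_assoc, hP.isIdempotentElem.eq]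

theorem trace_mul_nonneg (hP : IsStarProjection P) (hR : IsStarProjection R) :
    0 ≤ (P * R).trace := by
  rw [hP.trace_mul_eq_trace_conjTranspose_mul_self hR]
  exact (posSemidef_conjTranspose_mul_self _).trace_nonneg

theorem re_trace_mul_eq_zero_iff (hP : IsStarProjection P) (hR : IsStarProjection R) :
    RCLike.re (P * R).trace = 0 ↔ R * P = 0 := by
  obtain ⟨-, him⟩ := RCLike.nonneg_iff.mp (hP.trace_mul_nonneg hR)
  rw [← trace_conjTranspose_mul_self_eq_zero_iff,
    ← hP.trace_mul_eq_trace_conjTranspose_mul_self hR, RCLike.ext_iff (K := 𝕜)]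
  simp [him]

theorem eq_of_mul_eq_of_trace_eq (hP : IsStarProjection P) (hR : IsStarProjection R)
    (hPR : P * R = R) (htr : P.trace = R.trace) : P = R := by
  have hE := hR.sub_of_mul_eq_right hP hPR
  rw [← sub_eq_zero, ← hE.isIdempotentElem.eq, ← hE.re_trace_mul_eq_zero_iff hE,
    hE.isIdempotentElem.eq, trace_sub, htr, sub_self, map_zero]

theorem re_trace_mul_eq_zero_iff_eq {Q : Matrix m m 𝕜} (hP : IsStarProjection P)
    (hQ : IsStarProjection Q) (hR : IsStarProjection R) (hPQ : P * Q = 0)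
    (hPQR : (P + Q) * R = R) (htr : P.trace = R.trace) :
    RCLike.re (Q * R).trace = 0 ↔ R = P := by
  rw [hQ.re_trace_mul_eq_zero_iff hR]
  constructor
  · intro hRQ
    have hQR : Q * R = 0 :=
      (hR.isSelfAdjoint.commute_of_mul_eq_zero hQ.isSelfAdjoint hRQ).eq.symm.trans hRQ
    rw [add_mul, hQR, add_zero] at hPQR
    exact (hP.eq_of_mul_eq_of_trace_eq hR hPQR htr).symm
  · rintro rfl
    exact hPQ

end IsStarProjection

theorem bregman_smul_add_smul {n : ℕ} (f : ℝ → ℝ) (hf0 : f 0 = 0) (hf1 : f 1 = 0)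
    {P Q R : Matrix (Fin n) (Fin n) ℂ} (hP : IsStarProjection P) (hQ : IsStarProjection Q)
    (hR : IsStarProjection R) (hPQ : P * Q = 0) (htrP : P.trace = 1) (htrQ : Q.trace = 1)
    (hPQR : (P + Q) * R = R) (a b : ℝ) :
    bregman f R ((a : ℂ) • P + (b : ℂ) • Q) =
      a * deriv f a - f a + b * deriv f b - f b
        - deriv f a * (P * R).trace.re - deriv f b * (Q * R).trace.re := by
  have hQP : Q * P = 0 :=
    (hP.isSelfAdjoint.commute_of_mul_eq_zero hQ.isSelfAdjoint hPQ).eq.symm.trans hPQ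
  have hS : ((a : ℂ) • P + (b : ℂ) • Q).IsHermitian := by
    simp only [Complex.coe_smul]
    exact ((IsSelfAdjoint.all a).smul hP.isSelfAdjoint).add
      ((IsSelfAdjoint.all b).smul hQ.isSelfAdjoint)
  -- `deriv f 0`, possibly a junk value, only multiplies `1 - P - Q`, which kills `R`, `P` and `Q`.
  have hER : (1 - P - Q) * R = 0 := by
    rw [sub_mul, sub_mul, one_mul, sub_sub, ← add_mul, hPQR, sub_self]
  have hEP : (1 - P - Q) * P = 0 := by
    rw [sub_mul, sub_mul, one_mul, hP.isIdempotentElem.eq, hQP]; abel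
  have hEQ : (1 - P - Q) * Q = 0 := by
    rw [sub_mul, sub_mul, one_mul, hQ.isIdempotentElem.eq, hPQ]; abel
  rw [bregman, matFun_eq_cfc _ hR.isSelfAdjoint, matFun_eq_cfc _ hS,
    matFun_eq_cfc _ hS, cfc_eq_zero_of_isIdempotentElem hR.isIdempotentElem hf0 hf1]
  simp only [Complex.coe_smul]
  rw [cfc_smul_add_smul hP hQ hPQ, cfc_smul_add_smul hP hQ hPQ]
  simp only [hf0, zero_smul, zero_add, add_mul, mul_sub, mul_add, smul_mul_assoc, mul_smul_comm,
    hER, hEP, hEQ, hP.isIdempotentElem.eq, hQ.isIdempotentElem.eq, hPQ, hQP, smul_zero]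
  simp only [zero_sub, neg_add_rev, add_zero, trace_sub, trace_add, trace_neg, trace_smul, htrP,
    htrQ, Complex.real_smul, mul_one, Complex.sub_re, Complex.add_re, Complex.neg_re,
    Complex.ofReal_re, Complex.mul_re, Complex.ofReal_im, zero_mul, sub_zero]
  ring

theorem bregman_rankOne_max_min_general {n : ℕ} (f : ℝ → ℝ)
    (hconv : StrictConvexOn ℝ (Set.Ioi 0) f)
    (hdiff : ∀ x ∈ Set.Ioi (0 : ℝ), DifferentiableAt ℝ f x)
    (hf0 : f 0 = 0) (hf1 : f 1 = 0)
    (P Q : Matrix (Fin n) (Fin n) ℂ) (hP : IsRankOneProj P) (hQ : IsRankOneProj Q)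
    (hPQ : P * Q = 0)
    (lam mu : ℝ) (hlam : 0 < lam) (hlm : lam < mu) :
    ∀ R : Matrix (Fin n) (Fin n) ℂ, IsRankOneProj R → (P + Q) * R = R →
      (bregman f R ((lam : ℂ) • P + (mu : ℂ) • Q) ≤
          -(deriv f lam) + (lam * deriv f lam - f lam + mu * deriv f mu - f mu) ∧
        (bregman f R ((lam : ℂ) • P + (mu : ℂ) • Q) =
            -(deriv f lam) + (lam * deriv f lam - f lam + mu * deriv f mu - f mu) ↔ R = P)) ∧
      (-(deriv f mu) + (lam * deriv f lam - f lam + mu * deriv f mu - f mu) ≤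
          bregman f R ((lam : ℂ) • P + (mu : ℂ) • Q) ∧
        (bregman f R ((lam : ℂ) • P + (mu : ℂ) • Q) =
            -(deriv f mu) + (lam * deriv f lam - f lam + mu * deriv f mu - f mu) ↔ R = Q)) := by
  intro R hR hPQR
  have hQP : Q * P = 0 := (hP.isStarProjection.isSelfAdjoint.commute_of_mul_eq_zero
    hQ.isStarProjection.isSelfAdjoint hPQ).eq.symm.trans hPQ
  have hbreg := bregman_smul_add_smul f hf0 hf1 hP.isStarProjection hQ.isStarProjection
    hR.isStarProjection hPQ hP.trace_eq_one hQ.trace_eq_one hPQR lam mu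
  have hpq : (P * R).trace.re + (Q * R).trace.re = 1 := by
    rw [← Complex.add_re, ← trace_add, ← add_mul, hPQR, hR.trace_eq_one, Complex.one_re]
  have hp := (Complex.nonneg_iff.mp (hP.isStarProjection.trace_mul_nonneg hR.isStarProjection)).1
  have hq := (Complex.nonneg_iff.mp (hQ.isStarProjection.trace_mul_nonneg hR.isStarProjection)).1
  have hq0 := hP.isStarProjection.re_trace_mul_eq_zero_iff_eq hQ.isStarProjection
    hR.isStarProjection hPQ hPQR (by rw [hP.trace_eq_one, hR.trace_eq_one])
  have hp0 := hQ.isStarProjection.re_trace_mul_eq_zero_iff_eq hP.isStarProjection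
    hR.isStarProjection hQP (by rwa [add_comm]) (by rw [hQ.trace_eq_one, hR.trace_eq_one])
  have hd : 0 < deriv f mu - deriv f lam :=
    sub_pos.2 (hconv.strictMonoOn_deriv hdiff hlam (hlam.trans hlm) hlm)
  simp only [RCLike.re_to_complex] at hq0 hp0
  set C := lam * deriv f lam - f lam + mu * deriv f mu - f mu
  have hmax : bregman f R ((lam : ℂ) • P + (mu : ℂ) • Q) =
      -(deriv f lam) + C - (deriv f mu - deriv f lam) * (Q * R).trace.re := by
    rw [hbreg]; linear_combination (-deriv f lam) * hpq
  have hmin : bregman f R ((lam : ℂ) • P + (mu : ℂ) • Q) =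
      -(deriv f mu) + C + (deriv f mu - deriv f lam) * (P * R).trace.re := by
    rw [hbreg]; linear_combination (-deriv f mu) * hpq
  refine ⟨⟨?_, ?_⟩, ?_, ?_⟩
  · rw [hmax]; linarith [mul_nonneg hd.le hq]
  · rw [hmax, ← hq0, sub_eq_self, mul_eq_zero, or_iff_right hd.ne']
  · rw [hmin]; linarith [mul_nonneg hd.le hp]
  · rw [hmin, ← hp0, add_eq_left, mul_eq_zero, or_iff_right hd.ne']

/-- over rank-one projections supported in `supp S`, the Bregman
divergence to `S = λP + μQ` is maximal exactly at `P` and minimal exactly at `Q`. -/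
theorem bregman_rankOne_max_min {n : ℕ} (f : ℝ → ℝ)
    (hconv : StrictConvexOn ℝ (Set.Ioi 0) f)
    (hdiff : ∀ x ∈ Set.Ioi (0 : ℝ), DifferentiableAt ℝ f x)
    (hf0 : f 0 = 0) (hf1 : f 1 = 0)
    (P Q : Matrix (Fin n) (Fin n) ℂ) (hP : IsRankOneProj P) (hQ : IsRankOneProj Q)
    (hPQ : P * Q = 0)
    (lam mu : ℝ) (hlam : 0 < lam) (hlm : lam < mu) (hmu : mu < 1) (hsum : lam + mu = 1) :
    ∀ R : Matrix (Fin n) (Fin n) ℂ, IsRankOneProj R → (P + Q) * R = R →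
      (bregman f R ((lam : ℂ) • P + (mu : ℂ) • Q) ≤
          -(deriv f lam) + (lam * deriv f lam - f lam + mu * deriv f mu - f mu) ∧
        (bregman f R ((lam : ℂ) • P + (mu : ℂ) • Q) =
            -(deriv f lam) + (lam * deriv f lam - f lam + mu * deriv f mu - f mu) ↔ R = P)) ∧
      (-(deriv f mu) + (lam * deriv f lam - f lam + mu * deriv f mu - f mu) ≤
          bregman f R ((lam : ℂ) • P + (mu : ℂ) • Q) ∧
        (bregman f R ((lam : ℂ) • P + (mu : ℂ) • Q) =
            -(deriv f mu) + (lam * deriv f lam - f lam + mu * deriv f mu - f mu) ↔ R = Q)) :=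
  bregman_rankOne_max_min_general f hconv hdiff hf0 hf1 P Q hP hQ hPQ lam mu hlam hlm
end

section
/- Let f be strictly convex, continuous on [0,∞), with f(0)=f(1)=0, and suppose the Jensen f-divergence J_f is jointly convex on pairs of density operators. Then for all density operators A, B on a finite-dimensional complex Hilbert space of dimension ≥ 2, J_f(A,B) ≤ −2f(½), and if J_f(A,B) = −2f(½) then AB = 0. -/
open Matrix
open scoped ComplexOrder

/-- A density operator: positive semidefinite with unit trace. -/
def IsDensity {n : ℕ} (A : Matrix (Fin n) (Fin n) ℂ) : Prop :=
  A.PosSemidef ∧ A.trace = 1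

/-!
Spectral decomposition writes density operators as convex combinations `A = ∑ αᵢ Pᵢ`,
`B = ∑ βⱼ Qⱼ` of rank-one projections, so joint convexity gives
`J_f(A, B) ≤ ∑ αᵢ βⱼ J_f(Pᵢ, Qⱼ)`. As `f 0 = f 1 = 0`, `J_f(P, Q) = -tr f(M)` for the density
operator `M = (P + Q)/2`, which has rank at most two; strict convexity of `f` then gives
`tr f(M) ≥ 2 f(1/2)`, with equality only if both nonzero eigenvalues of `M` are `1/2`. In that
case `(1 + tr PQ)/2 = tr M² = 1/2`, and `tr PQ = tr (PQ)(PQ)*` vanishes only if `PQ = 0`.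
Equality for `A, B` forces equality for every pair with `αᵢ βⱼ ≠ 0`, hence
`AB = ∑ αᵢ βⱼ PᵢQⱼ = 0`.
-/

theorem sum_prod_mul_smul_fst {R M ι κ : Type*} [Semiring R] [AddCommMonoid M] [Module R M]
    [Fintype ι] [Fintype κ] (α : ι → R) {β : κ → R} (hβ : ∑ j, β j = 1) (x : ι → M) :
    ∑ p : ι × κ, (α p.1 * β p.2) • x p.1 = ∑ i, α i • x i := by
  simp only [Fintype.sum_prod_type, ← Finset.sum_smul, ← Finset.mul_sum, hβ, mul_one]

theorem sum_prod_mul_smul_snd {R M ι κ : Type*} [Semiring R] [AddCommMonoid M] [Module R M]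
    [Fintype ι] [Fintype κ] {α : ι → R} (hα : ∑ i, α i = 1) (β : κ → R) (y : κ → M) :
    ∑ p : ι × κ, (α p.1 * β p.2) • y p.2 = ∑ j, β j • y j := by
  simp only [Fintype.sum_prod_type_right, ← Finset.sum_smul, ← Finset.sum_mul, hα, one_mul]


theorem Matrix.rank_add_le {m n K : Type*} [Field K] [Fintype n] (A B : Matrix m n K) :
    (A + B).rank ≤ A.rank + B.rank := by
  rw [rank, rank, rank, mulVecLin_add]
  exact (Submodule.finrank_mono (LinearMap.range_add_le _ _)).trans
    (Submodule.finrank_add_le_finrank_add_finrank _ _)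

theorem Matrix.trace_conjStarAlgAut {m R : Type*} [Fintype m] [DecidableEq m] [CommRing R]
    [StarRing R] (U : unitary (Matrix m m R)) (X : Matrix m m R) :
    (Unitary.conjStarAlgAut R _ U X).trace = X.trace := by
  rw [Unitary.conjStarAlgAut_apply, trace_mul_cycle, Unitary.coe_star_mul_self, one_mul]

theorem Matrix.mul_eq_zero_of_trace_mul_eq_zero {m R : Type*} [Fintype m] [PartialOrder R]
    [CommRing R] [StarRing R] [StarOrderedRing R] [NoZeroDivisors R] {P Q : Matrix m m R}
    (hP : P.IsHermitian) (hPP : P * P = P) (hQ : Q.IsHermitian) (hQQ : Q * Q = Q)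
    (h : (P * Q).trace = 0) : P * Q = 0 := by
  rw [← trace_mul_conjTranspose_self_eq_zero_iff, conjTranspose_mul, hP.eq, hQ.eq,
    Matrix.mul_assoc, ← Matrix.mul_assoc Q, hQQ, trace_mul_comm, Matrix.mul_assoc, hPP,
    trace_mul_comm, h]

namespace Matrix.IsHermitian

variable {𝕜 m : Type*} [RCLike 𝕜] [Fintype m] [DecidableEq m] {A : Matrix m m 𝕜}

theorem eigenvalues_eq_zero_or_one_of_mul_self_eq (hA : A.IsHermitian) (hAA : A * A = A)
    (i : m) : hA.eigenvalues i = 0 ∨ hA.eigenvalues i = 1 := by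
  set v := (hA.eigenvectorBasis i).ofLp
  have hv : v ≠ 0 := (WithLp.ofLp_eq_zero 2).ne.2 (hA.eigenvectorBasis.orthonormal.ne_zero i)
  have hAv := hA.mulVec_eigenvectorBasis i
  have : (hA.eigenvalues i * hA.eigenvalues i) • v = hA.eigenvalues i • v := by
    rw [mul_smul, ← hAv, ← mulVec_smul, ← hAv, mulVec_mulVec, hAA]
  exact (mul_right_eq_self₀.1 (smul_left_injective ℝ hv this)).symm

theorem trace_mul_self (hA : A.IsHermitian) :
    (A * A).trace = ((∑ i, hA.eigenvalues i ^ 2 : ℝ) : 𝕜) := by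
  conv_lhs => rw [hA.spectral_theorem]
  rw [← map_mul, trace_conjStarAlgAut, diagonal_mul_diagonal, trace_diagonal]
  simp [sq]

end Matrix.IsHermitian

section Density

variable {n : ℕ}

theorem trace_matFun (f : ℝ → ℝ) {A : Matrix (Fin n) (Fin n) ℂ} (hA : A.IsHermitian) :
    (matFun f A).trace = ∑ i, (f (hA.eigenvalues i) : ℂ) := by
  rw [matFun, dif_pos hA, ← Unitary.conjStarAlgAut_apply (S := ℂ), trace_conjStarAlgAut,
    trace_diagonal]

theorem isRankOneProj_single (i : Fin n) : IsRankOneProj (single i i (1 : ℂ)) := by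
  refine ⟨by simp [IsHermitian, conjTranspose_single], by simp [single_mul_single_same], ?_⟩
  rw [← diagonal_single, rank_diagonal, Fintype.card_subtype]
  simp [Pi.single_apply, Finset.filter_eq']

namespace IsRankOneProj

variable {P Q : Matrix (Fin n) (Fin n) ℂ}

theorem conjStarAlgAut (hP : IsRankOneProj P) (U : unitary (Matrix (Fin n) (Fin n) ℂ)) :
    IsRankOneProj (Unitary.conjStarAlgAut ℂ _ U P) := by
  refine ⟨?_, by rw [← map_mul, hP.2.1], ?_⟩
  · rw [IsHermitian, ← star_eq_conjTranspose, ← map_star, star_eq_conjTranspose, hP.1.eq]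
  · rw [Unitary.conjStarAlgAut_apply, ← Unitary.coe_star,
      rank_mul_eq_left_of_isUnit_det _ _ (UnitaryGroup.det_isUnit (star U)),
      rank_mul_eq_right_of_isUnit_det _ _ (UnitaryGroup.det_isUnit U), hP.2.2]

theorem sum_eigenvalues (hP : IsRankOneProj P) {g : ℝ → ℝ} (hg : g 0 = 0) :
    ∑ i, g (hP.1.eigenvalues i) = g 1 := by
  classical
  have h01 := hP.1.eigenvalues_eq_zero_or_one_of_mul_self_eq hP.2.1
  calc ∑ i, g (hP.1.eigenvalues i)
      = ∑ i with hP.1.eigenvalues i ≠ 0, g (hP.1.eigenvalues i) :=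
        (Finset.sum_filter_of_ne fun i _ h ↦ by contrapose! h; rw [h, hg]).symm
    _ = ∑ i with hP.1.eigenvalues i ≠ 0, g 1 :=
        Finset.sum_congr rfl fun i hi ↦ by
          rw [(h01 i).resolve_left (Finset.mem_filter.1 hi).2]
    _ = g 1 := by
        rw [Finset.sum_const, ← Fintype.card_subtype, ← hP.1.rank_eq_card_non_zero_eigs, hP.2.2,
          one_smul]

theorem trace_eq_one_s11 (hP : IsRankOneProj P) : P.trace = 1 := by
  rw [hP.1.trace_eq_sum_eigenvalues, ← RCLike.ofReal_sum, hP.sum_eigenvalues (g := fun x ↦ x) rfl,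
    RCLike.ofReal_one]

theorem trace_matFun (hP : IsRankOneProj P) {f : ℝ → ℝ} (hf0 : f 0 = 0) :
    (matFun f P).trace = f 1 := by
  rw [_root_.trace_matFun f hP.1]
  exact_mod_cast hP.sum_eigenvalues hf0

theorem isDensity (hP : IsRankOneProj P) : IsDensity P := by
  refine ⟨?_, hP.trace_eq_one_s11⟩
  simpa [hP.1.eq, hP.2.1] using posSemidef_conjTranspose_mul_self P

end IsRankOneProj

theorem convex_setOf_isDensity : Convex ℝ {A : Matrix (Fin n) (Fin n) ℂ | IsDensity A} := by
  intro A hA B hB a b ha hb hab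
  refine ⟨(hA.1.smul ha).add (hB.1.smul hb), ?_⟩
  rw [trace_add, trace_smul, trace_smul, hA.2, hB.2, ← Complex.coe_smul, ← Complex.coe_smul]
  simp only [smul_eq_mul, mul_one]
  exact_mod_cast hab

theorem IsDensity.sum_eigenvalues {A : Matrix (Fin n) (Fin n) ℂ} (hA : IsDensity A) :
    ∑ i, hA.1.1.eigenvalues i = 1 := by
  rw [← RCLike.ofReal_inj (K := ℂ), RCLike.ofReal_sum, ← hA.1.1.trace_eq_sum_eigenvalues, hA.2,
    RCLike.ofReal_one]

theorem IsDensity.exists_eq_sum_smul_isRankOneProj {A : Matrix (Fin n) (Fin n) ℂ}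
    (hA : IsDensity A) :
    ∃ (w : Fin n → ℝ) (P : Fin n → Matrix (Fin n) (Fin n) ℂ), (∀ i, 0 ≤ w i) ∧
      ∑ i, w i = 1 ∧ (∀ i, IsRankOneProj (P i)) ∧ A = ∑ i, w i • P i := by
  set hAh := hA.1.1
  refine ⟨hAh.eigenvalues, fun i ↦ Unitary.conjStarAlgAut ℂ _ hAh.eigenvectorUnitary (single i i 1),
    hA.1.eigenvalues_nonneg, ?_, fun i ↦ (isRankOneProj_single i).conjStarAlgAut _, ?_⟩
  · exact hA.sum_eigenvalues
  · conv_lhs => rw [hAh.spectral_theorem, ← sum_single_eq_diagonal]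
    simp_rw [map_sum, ← Complex.coe_smul, ← map_smul, smul_single, smul_eq_mul, mul_one]
    rfl

end Density

section StrictConvex

variable {f : ℝ → ℝ}

theorem ConvexOn.two_mul_apply_half_le (hconv : ConvexOn ℝ (Set.Ici 0) f) {x y : ℝ} (hx : 0 ≤ x)
    (hy : 0 ≤ y) (hxy : x + y = 1) : 2 * f (1 / 2) ≤ f x + f y := by
  have := hconv.2 (Set.mem_Ici.2 hx) (Set.mem_Ici.2 hy) (by norm_num : (0 : ℝ) ≤ 1 / 2)
    (by norm_num : (0 : ℝ) ≤ 1 / 2) (by norm_num)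
  rw [smul_eq_mul, smul_eq_mul, ← mul_add, hxy, mul_one] at this
  simp only [smul_eq_mul] at this
  linarith

theorem StrictConvexOn.two_mul_apply_half_lt (hconv : StrictConvexOn ℝ (Set.Ici 0) f) {x y : ℝ}
    (hx : 0 ≤ x) (hy : 0 ≤ y) (hxy : x + y = 1) (hne : x ≠ y) : 2 * f (1 / 2) < f x + f y := by
  have := hconv.2 (Set.mem_Ici.2 hx) (Set.mem_Ici.2 hy) hne (by norm_num : (0 : ℝ) < 1 / 2)
    (by norm_num : (0 : ℝ) < 1 / 2) (by norm_num)
  rw [smul_eq_mul, smul_eq_mul, ← mul_add, hxy, mul_one] at this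
  simp only [smul_eq_mul] at this
  linarith

theorem StrictConvexOn.two_mul_apply_half_le_sum (hconv : StrictConvexOn ℝ (Set.Ici 0) f)
    (hf0 : f 0 = 0) (hf1 : f 1 = 0) {ι : Type*} [Fintype ι] {μ : ι → ℝ} (hμ0 : ∀ i, 0 ≤ μ i)
    (hμ1 : ∑ i, μ i = 1) (hsupp : Fintype.card {i // μ i ≠ 0} ≤ 2) :
    2 * f (1 / 2) ≤ ∑ i, f (μ i) ∧ (∑ i, f (μ i) = 2 * f (1 / 2) → ∑ i, μ i ^ 2 = 1 / 2) := by
  classical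
  have hs (g : ℝ → ℝ) (hg : g 0 = 0) : ∑ i, g (μ i) = ∑ i with μ i ≠ 0, g (μ i) :=
    (Finset.sum_filter_of_ne fun i _ h ↦ by contrapose! h; rw [h, hg]).symm
  rw [hs f hf0, hs (· ^ 2) (zero_pow two_ne_zero)]
  rw [hs (fun x ↦ x) rfl] at hμ1
  have hhalf : 2 * f (1 / 2) < 0 := by
    simpa [hf0, hf1] using hconv.two_mul_apply_half_lt le_rfl zero_le_one (zero_add 1) zero_ne_one
  rw [Fintype.card_subtype] at hsupp
  interval_cases hcard : (Finset.univ.filter fun i ↦ μ i ≠ 0).card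
  · simp_all [Finset.card_eq_zero]
  · obtain ⟨a, ha⟩ := Finset.card_eq_one.1 hcard
    rw [ha, Finset.sum_singleton] at hμ1 ⊢
    rw [Finset.sum_singleton, hμ1, hf1]
    exact ⟨hhalf.le, fun h ↦ by linarith⟩
  · obtain ⟨a, b, hab, hsab⟩ := Finset.card_eq_two.1 hcard
    rw [hsab, Finset.sum_pair hab] at hμ1 ⊢
    rw [Finset.sum_pair hab]
    refine ⟨hconv.convexOn.two_mul_apply_half_le (hμ0 a) (hμ0 b) hμ1, fun h ↦ ?_⟩
    obtain hμab : μ a = μ b := by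
      by_contra hne
      exact (hconv.two_mul_apply_half_lt (hμ0 a) (hμ0 b) hμ1 hne).ne' h
    nlinarith

end StrictConvex
section Jensen

variable {n : ℕ} {f : ℝ → ℝ}

theorem convexOn_jensen
    (hjc : ∀ t : ℝ, 0 ≤ t → t ≤ 1 →
      ∀ A₁ B₁ A₂ B₂ : Matrix (Fin n) (Fin n) ℂ,
        IsDensity A₁ → IsDensity B₁ → IsDensity A₂ → IsDensity B₂ →
        jensen f ((t : ℂ) • A₁ + ((1 - t : ℝ) : ℂ) • A₂)
            ((t : ℂ) • B₁ + ((1 - t : ℝ) : ℂ) • B₂) ≤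
          t * jensen f A₁ B₁ + (1 - t) * jensen f A₂ B₂) :
    ConvexOn ℝ ({A : Matrix (Fin n) (Fin n) ℂ | IsDensity A} ×ˢ {A | IsDensity A})
      (Function.uncurry (jensen f)) := by
  refine ⟨convex_setOf_isDensity.prod convex_setOf_isDensity, ?_⟩
  rintro ⟨A₁, B₁⟩ ⟨hA₁, hB₁⟩ ⟨A₂, B₂⟩ ⟨hA₂, hB₂⟩ a b ha hb hab
  obtain rfl : b = 1 - a := by linarith
  simpa only [Function.uncurry_apply_pair, Prod.smul_mk, Prod.mk_add_mk, Complex.coe_smul,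
    smul_eq_mul] using hjc a ha (by linarith) A₁ B₁ A₂ B₂ hA₁ hB₁ hA₂ hB₂

theorem IsRankOneProj.jensen_max (hconv : StrictConvexOn ℝ (Set.Ici 0) f) (hf0 : f 0 = 0)
    (hf1 : f 1 = 0) {P Q : Matrix (Fin n) (Fin n) ℂ} (hP : IsRankOneProj P)
    (hQ : IsRankOneProj Q) :
    jensen f P Q ≤ -2 * f (1 / 2) ∧ (jensen f P Q = -2 * f (1 / 2) → P * Q = 0) := by
  set M : Matrix (Fin n) (Fin n) ℂ := (1 / 2 : ℂ) • (P + Q) with hM_def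
  have hM : IsDensity M := by
    convert convex_setOf_isDensity hP.isDensity hQ.isDensity (by norm_num : (0 : ℝ) ≤ 1 / 2)
      (by norm_num : (0 : ℝ) ≤ 1 / 2) (by norm_num) using 1
    rw [hM_def, smul_add, ← Complex.coe_smul, ← Complex.coe_smul]
    norm_num
  have hsupp : Fintype.card {i // hM.1.1.eigenvalues i ≠ 0} ≤ 2 := by
    rw [← hM.1.1.rank_eq_card_non_zero_eigs, hM_def,
      rank_smul_of_mem_nonZeroDivisors _ (mem_nonZeroDivisors_of_ne_zero (by norm_num))]
    exact (rank_add_le P Q).trans (by rw [hP.2.2, hQ.2.2])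
  obtain ⟨hle, heq⟩ :=
    hconv.two_mul_apply_half_le_sum hf0 hf1 hM.1.eigenvalues_nonneg hM.sum_eigenvalues hsupp
  have hJ : jensen f P Q = -∑ i, f (hM.1.1.eigenvalues i) := by
    rw [jensen, trace_sub, trace_smul, trace_add, hP.trace_matFun hf0, hQ.trace_matFun hf0, hf1,
      ← hM_def, _root_.trace_matFun f hM.1.1]
    simp
  refine ⟨by linarith, fun h ↦ mul_eq_zero_of_trace_mul_eq_zero hP.1 hP.2.1 hQ.1 hQ.2.1 ?_⟩
  have hMM : (M * M).trace = 1 / 2 := by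
    rw [hM.1.1.trace_mul_self, heq (by linarith)]
    norm_num
  have hexp : (M * M).trace = (P.trace + 2 * (P * Q).trace + Q.trace) / 4 := by
    rw [hM_def, smul_mul_smul_comm, trace_smul, mul_add, add_mul, add_mul, trace_add, trace_add,
      trace_add, hP.2.1, hQ.2.1, trace_mul_comm Q P, smul_eq_mul]
    ring
  rw [hP.trace_eq_one_s11, hQ.trace_eq_one_s11] at hexp
  linear_combination 2 * (hexp.symm.trans hMM)

theorem jensen_sum_smul_le
    (hJ : ConvexOn ℝ ({A : Matrix (Fin n) (Fin n) ℂ | IsDensity A} ×ˢ {A | IsDensity A})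
      (Function.uncurry (jensen f)))
    {ι : Type*} [Fintype ι] {w : ι → ℝ} (hw0 : ∀ i, 0 ≤ w i) (hw1 : ∑ i, w i = 1)
    {X Y : ι → Matrix (Fin n) (Fin n) ℂ} (hX : ∀ i, IsDensity (X i)) (hY : ∀ i, IsDensity (Y i)) :
    jensen f (∑ i, w i • X i) (∑ i, w i • Y i) ≤ ∑ i, w i * jensen f (X i) (Y i) := by
  simpa [← prod_mk_sum] using
    hJ.map_sum_le (t := Finset.univ) (p := fun i ↦ (X i, Y i)) (fun i _ ↦ hw0 i) hw1
      fun i _ ↦ ⟨hX i, hY i⟩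

end Jensen

theorem jensen_density_max_general {n : ℕ} (f : ℝ → ℝ)
    (hconv : StrictConvexOn ℝ (Set.Ici 0) f)
    (hf0 : f 0 = 0) (hf1 : f 1 = 0)
    (hjc : ∀ t : ℝ, 0 ≤ t → t ≤ 1 →
      ∀ A₁ B₁ A₂ B₂ : Matrix (Fin n) (Fin n) ℂ,
        IsDensity A₁ → IsDensity B₁ → IsDensity A₂ → IsDensity B₂ →
        jensen f ((t : ℂ) • A₁ + ((1 - t : ℝ) : ℂ) • A₂)
            ((t : ℂ) • B₁ + ((1 - t : ℝ) : ℂ) • B₂) ≤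
          t * jensen f A₁ B₁ + (1 - t) * jensen f A₂ B₂)
    (A B : Matrix (Fin n) (Fin n) ℂ) (hA : IsDensity A) (hB : IsDensity B) :
    jensen f A B ≤ -2 * f (1/2) ∧ (jensen f A B = -2 * f (1/2) → A * B = 0) := by
  obtain ⟨α, P, hα0, hα1, hP, rfl⟩ := hA.exists_eq_sum_smul_isRankOneProj
  obtain ⟨β, Q, hβ0, hβ1, hQ, rfl⟩ := hB.exists_eq_sum_smul_isRankOneProj
  set w : Fin n × Fin n → ℝ := fun p ↦ α p.1 * β p.2
  have hw0 (p : Fin n × Fin n) : 0 ≤ w p := mul_nonneg (hα0 p.1) (hβ0 p.2)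
  have hw1 : ∑ p, w p = 1 := by
    simp only [w, Fintype.sum_prod_type, ← Finset.mul_sum, hβ1, mul_one, hα1]
  have hPQ (p : Fin n × Fin n) := (hP p.1).jensen_max hconv hf0 hf1 (hQ p.2)
  have hwPQ : ∀ p ∈ Finset.univ, w p * jensen f (P p.1) (Q p.2) ≤ w p * (-2 * f (1 / 2)) :=
    fun p _ ↦ mul_le_mul_of_nonneg_left (hPQ p).1 (hw0 p)
  have hsum_const : ∑ p, w p * (-2 * f (1 / 2)) = -2 * f (1 / 2) := by
    rw [← Finset.sum_mul, hw1, one_mul]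
  have hle : jensen f (∑ i, α i • P i) (∑ j, β j • Q j) ≤ ∑ p, w p * jensen f (P p.1) (Q p.2) := by
    rw [← sum_prod_mul_smul_fst α hβ1, ← sum_prod_mul_smul_snd hα1 β]
    exact jensen_sum_smul_le (convexOn_jensen hjc) hw0 hw1 (fun p ↦ (hP p.1).isDensity)
      fun p ↦ (hQ p.2).isDensity
  refine ⟨hle.trans ((Finset.sum_le_sum hwPQ).trans hsum_const.le), fun heq ↦ ?_⟩
  have hterm := (Finset.sum_eq_sum_iff_of_le hwPQ).1
    (le_antisymm (Finset.sum_le_sum hwPQ) (by rw [hsum_const, ← heq]; exact hle))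
  rw [Finset.sum_mul_sum]
  refine Finset.sum_eq_zero fun i _ ↦ Finset.sum_eq_zero fun j _ ↦ ?_
  rw [smul_mul_smul_comm]
  rcases eq_or_ne (α i * β j) 0 with h | h
  · rw [h, zero_smul]
  · rw [(hPQ (i, j)).2 (mul_left_cancel₀ h (hterm (i, j) (Finset.mem_univ _))), smul_zero]

/-- if `J_f` is jointly convex then `J_f(A,B) ≤ -2f(1/2)` on
density operators, and equality forces `AB = 0`. -/
theorem jensen_density_max {n : ℕ} (hn : 2 ≤ n) (f : ℝ → ℝ)
    (hconv : StrictConvexOn ℝ (Set.Ici 0) f)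
    (hcont : ContinuousOn f (Set.Ici 0))
    (hf0 : f 0 = 0) (hf1 : f 1 = 0)
    (hjc : ∀ t : ℝ, 0 ≤ t → t ≤ 1 →
      ∀ A₁ B₁ A₂ B₂ : Matrix (Fin n) (Fin n) ℂ,
        IsDensity A₁ → IsDensity B₁ → IsDensity A₂ → IsDensity B₂ →
        jensen f ((t : ℂ) • A₁ + ((1 - t : ℝ) : ℂ) • A₂)
            ((t : ℂ) • B₁ + ((1 - t : ℝ) : ℂ) • B₂) ≤
          t * jensen f A₁ B₁ + (1 - t) * jensen f A₂ B₂)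
    (A B : Matrix (Fin n) (Fin n) ℂ) (hA : IsDensity A) (hB : IsDensity B) :
    jensen f A B ≤ -2 * f (1/2) ∧ (jensen f A B = -2 * f (1/2) → A * B = 0) :=
  jensen_density_max_general f hconv hf0 hf1 hjc A B hA hB
end
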